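/- Let A be a real m×n matrix with no zero row and b ∈ ℝ^m, and suppose all nonzero singular values of A are equal to σ > 0, i.e. A Aᵀ A Aᵀ = σ² A Aᵀ. Let x ∈ ℝⁿ with x − x̄ ∈ Range(Aᵀ), and for each row index i define the RKAS update x⁺(i) = x − α(i) A_{i,:}ᵀ with α(i) = ⟨A A_{i,:}ᵀ, A x − b⟩ / ‖A A_{i,:}ᵀ‖₂². Then the one-step contraction holds with equality: ∑_{i=1}^m (‖A_{i,:}‖₂²/‖A‖_F²) · ‖A x⁺(i) − A x̄‖₂² = (1 − σ²/‖A‖_F²) · ‖A x − A x̄‖₂². -/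

import Mathlib

open Matrix
open scoped RealInnerProductSpace

/-- `mulE A x` is the matrix-vector product `A x`, viewed as a map between
Euclidean spaces (so that `‖·‖` is the Euclidean norm and `⟪·,·⟫` the dot product). -/
noncomputable def mulE {m n : ℕ} (A : Matrix (Fin m) (Fin n) ℝ)
    (x : EuclideanSpace ℝ (Fin n)) : EuclideanSpace ℝ (Fin m) :=
  Matrix.toEuclideanLin A x

/-- `rowE A i` is the `i`-th row of `A` (i.e. the vector `A_{i,:}ᵀ`),
viewed as an element of Euclidean space. -/
noncomputable def rowE {m n : ℕ} (A : Matrix (Fin m) (Fin n) ℝ) (i : Fin m) :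
    EuclideanSpace ℝ (Fin n) :=
  (EuclideanSpace.equiv (Fin n) ℝ).symm (A i)

/-- One step of the RKAS method: `x⁺ = x − α A_{i,:}ᵀ` with the adaptive
stepsize `α = ⟨A A_{i,:}ᵀ, A x − b⟩ / ‖A A_{i,:}ᵀ‖²`. -/
noncomputable def rkasStep {m n : ℕ} (A : Matrix (Fin m) (Fin n) ℝ)
    (b : EuclideanSpace ℝ (Fin m)) (x : EuclideanSpace ℝ (Fin n)) (i : Fin m) :
    EuclideanSpace ℝ (Fin n) :=
  x - (⟪mulE A (rowE A i), mulE A x - b⟫ / ‖mulE A (rowE A i)‖ ^ 2) • rowE A i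

/-- `frobSq A = ‖A‖_F²`, the squared Frobenius norm of `A`. -/
noncomputable def frobSq {m n : ℕ} (A : Matrix (Fin m) (Fin n) ℝ) : ℝ :=
  ∑ i, ∑ j, A i j ^ 2

lemma mulE_apply {m n : ℕ} (A : Matrix (Fin m) (Fin n) ℝ) (x : EuclideanSpace ℝ (Fin n)) (j : Fin m) :
    mulE A x j = ∑ k, A j k * x k := by
  simp [mulE, Matrix.toEuclideanLin, Matrix.toLin'_apply, Matrix.mulVec, dotProduct]

lemma rowE_apply {m n : ℕ} (A : Matrix (Fin m) (Fin n) ℝ) (i : Fin m) (j : Fin n) :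
    rowE A i j = A i j := rfl

lemma normSq_eq {k : ℕ} (x : EuclideanSpace ℝ (Fin k)) : ‖x‖ ^ 2 = ∑ i, x i ^ 2 := by
  rw [← real_inner_self_eq_norm_sq]
  rw [PiLp.inner_apply]
  exact Finset.sum_congr rfl fun i _ => by rw [real_inner_self_eq_norm_sq, Real.norm_eq_abs, sq_abs]

lemma inner_eq {k : ℕ} (x y : EuclideanSpace ℝ (Fin k)) : ⟪x, y⟫ = ∑ i, x i * y i := by
  simp [PiLp.inner_apply]
  exact Finset.sum_congr rfl fun _ _ => mul_comm _ _

lemma proj_resid {k : ℕ} (v r : EuclideanSpace ℝ (Fin k)) (hv : v ≠ 0) :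
    ‖r - (⟪v, r⟫ / ‖v‖ ^ 2) • v‖ ^ 2 = ‖r‖ ^ 2 - ⟪v, r⟫ ^ 2 / ‖v‖ ^ 2 := by
  have hv2 : ‖v‖ ≠ 0 := norm_ne_zero_iff.mpr hv
  rw [norm_sub_sq_real, real_inner_smul_right, norm_smul, Real.norm_eq_abs]
  rw [real_inner_comm r v]
  rw [mul_pow, sq_abs]
  field_simp
  ring

lemma mulE_sub {m n : ℕ} (A : Matrix (Fin m) (Fin n) ℝ) (x y : EuclideanSpace ℝ (Fin n)) :
    mulE A (x - y) = mulE A x - mulE A y := map_sub (Matrix.toEuclideanLin A) x y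

lemma mulE_smul {m n : ℕ} (A : Matrix (Fin m) (Fin n) ℝ) (c : ℝ) (y : EuclideanSpace ℝ (Fin n)) :
    mulE A (c • y) = c • mulE A y := map_smul (Matrix.toEuclideanLin A) c y

lemma mulE_adj {m n : ℕ} (A : Matrix (Fin m) (Fin n) ℝ) (y : EuclideanSpace ℝ (Fin n))
    (w : EuclideanSpace ℝ (Fin m)) : ⟪mulE A y, w⟫ = ⟪y, mulE Aᵀ w⟫ := by
  rw [inner_eq, inner_eq]
  simp only [mulE_apply, Matrix.transpose_apply, Finset.sum_mul, Finset.mul_sum]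
  rw [Finset.sum_comm]
  exact Finset.sum_congr rfl fun k _ => Finset.sum_congr rfl fun j _ => by ring


/-- when all nonzero singular values of `A` are equal to `σ > 0`
(i.e. `A Aᵀ A Aᵀ = σ² A Aᵀ`), the one-step RKAS contraction holds with equality:
`∑_i (‖A_{i,:}‖²/‖A‖_F²) ‖A x⁺(i) − A x̄‖² = (1 − σ²/‖A‖_F²) ‖A x − A x̄‖²`. -/
theorem rkas_one_step_contraction_tight (m n : ℕ) (A : Matrix (Fin m) (Fin n) ℝ)
    (hA : A ≠ 0) (hrows : ∀ i, A i ≠ 0)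
    (b : EuclideanSpace ℝ (Fin m))
    -- all nonzero singular values of `A` equal `σ > 0`
    (σ : ℝ) (hσ_pos : 0 < σ)
    (hσ : A * Aᵀ * A * Aᵀ = σ ^ 2 • (A * Aᵀ))
    -- `x̄ = A†b`: the unique vector in `Range(Aᵀ)` satisfying `Aᵀ A x̄ = Aᵀ b`
    (xbar : EuclideanSpace ℝ (Fin n))
    (hxbar_mem : xbar ∈ Set.range (mulE Aᵀ))
    (hxbar_normal : mulE Aᵀ (mulE A xbar) = mulE Aᵀ b)
    -- the current iterate satisfies `x − x̄ ∈ Range(Aᵀ)`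
    (x : EuclideanSpace ℝ (Fin n)) (hx : x - xbar ∈ Set.range (mulE Aᵀ)) :
    ∑ i, ‖rowE A i‖ ^ 2 / frobSq A * ‖mulE A (rkasStep A b x i) - mulE A xbar‖ ^ 2
      = (1 - σ ^ 2 / frobSq A) * ‖mulE A x - mulE A xbar‖ ^ 2 := by
  obtain ⟨u, hu⟩ := hx
  set r : EuclideanSpace ℝ (Fin m) := mulE A x - mulE A xbar with hrdef
  have hAAt : ∀ i j, (A * Aᵀ) i j = ∑ k, A i k * A j k := by
    intro i j; simp [Matrix.mul_apply, Matrix.transpose_apply]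
  have hsym : ∀ i j, (A * Aᵀ) i j = (A * Aᵀ) j i := by
    intro i j; rw [hAAt, hAAt]; exact Finset.sum_congr rfl fun k _ => mul_comm _ _
  have key : ∀ i j, (∑ l, (A * Aᵀ) i l * (A * Aᵀ) l j) = σ ^ 2 * (A * Aᵀ) i j := by
    intro i j
    have h1 : A * Aᵀ * A * Aᵀ = (A * Aᵀ) * (A * Aᵀ) := by rw [Matrix.mul_assoc]
    have h2 := congrFun (congrFun (h1 ▸ hσ) i) j
    simpa [Matrix.mul_apply, Matrix.smul_apply] using h2
  have hv : ∀ i j, mulE A (rowE A i) j = (A * Aᵀ) j i := by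
    intro i j; rw [mulE_apply, hAAt]; rfl
  have hr : ∀ j, r j = ∑ l, (A * Aᵀ) j l * u l := by
    intro j
    have h3 : r = mulE A (x - xbar) := by rw [hrdef]; simp [mulE, map_sub]
    rw [h3, ← hu, mulE_apply]
    simp only [mulE_apply, Matrix.transpose_apply, Finset.mul_sum]
    rw [Finset.sum_comm]
    simp only [hAAt, Finset.sum_mul]
    exact Finset.sum_congr rfl fun l _ => Finset.sum_congr rfl fun k _ => by ring
  have hrowne : ∀ i, rowE A i ≠ 0 := by
    intro i h
    exact hrows i (funext fun j => by rw [← rowE_apply A i j, h]; simp)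
  have hrowpos : ∀ i, 0 < ‖rowE A i‖ ^ 2 := fun i =>
    pow_pos (norm_pos_iff.mpr (hrowne i)) 2
  have hvnorm : ∀ i, ‖mulE A (rowE A i)‖ ^ 2 = σ ^ 2 * ‖rowE A i‖ ^ 2 := by
    intro i
    rw [normSq_eq, normSq_eq]
    calc (∑ j, (mulE A (rowE A i) j) ^ 2)
        = ∑ j, (A * Aᵀ) i j * (A * Aᵀ) j i := by
          refine Finset.sum_congr rfl fun j _ => ?_
          rw [hv, sq, ← hsym i j]
      _ = σ ^ 2 * (A * Aᵀ) i i := key i i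
      _ = σ ^ 2 * ∑ k, rowE A i k ^ 2 := by
          rw [hAAt]
          congr 1
          exact Finset.sum_congr rfl fun k _ => by rw [rowE_apply]; ring
  have hvne : ∀ i, mulE A (rowE A i) ≠ 0 := by
    intro i h
    have h4 := hvnorm i
    rw [h, norm_zero] at h4
    have : (0:ℝ) < σ ^ 2 * ‖rowE A i‖ ^ 2 :=
      mul_pos (pow_pos hσ_pos 2) (hrowpos i)
    simp [← h4] at this
  have hinner : ∀ i, ⟪mulE A (rowE A i), r⟫ = σ ^ 2 * r i := by
    intro i
    rw [inner_eq]
    calc (∑ j, mulE A (rowE A i) j * r j)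
        = ∑ j, (A * Aᵀ) i j * ∑ l, (A * Aᵀ) j l * u l := by
          refine Finset.sum_congr rfl fun j _ => ?_
          rw [hv, hr, ← hsym i j]
      _ = ∑ l, (∑ j, (A * Aᵀ) i j * (A * Aᵀ) j l) * u l := by
          simp only [Finset.mul_sum, Finset.sum_mul]
          rw [Finset.sum_comm]
          exact Finset.sum_congr rfl fun l _ => Finset.sum_congr rfl fun j _ => by ring
      _ = ∑ l, σ ^ 2 * ((A * Aᵀ) i l * u l) := by
          refine Finset.sum_congr rfl fun l _ => ?_
          rw [key]; ring
      _ = σ ^ 2 * r i := by rw [← Finset.mul_sum, hr]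
  have hib : ∀ i, ⟪mulE A (rowE A i), mulE A x - b⟫ = ⟪mulE A (rowE A i), r⟫ := by
    intro i
    have h5 : mulE A x - b = r + (mulE A xbar - b) := by rw [hrdef]; abel
    rw [h5, inner_add_right]
    have horth : ⟪mulE A (rowE A i), mulE A xbar - b⟫ = 0 := by
      rw [mulE_adj]
      have : mulE Aᵀ (mulE A xbar - b) = 0 := by
        have h6 : mulE Aᵀ (mulE A xbar - b) = mulE Aᵀ (mulE A xbar) - mulE Aᵀ b := by
          simp [mulE, map_sub]
        rw [h6, hxbar_normal, sub_self]
      rw [this, inner_zero_right]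
    rw [horth, add_zero]
  have hterm : ∀ i, ‖mulE A (rkasStep A b x i) - mulE A xbar‖ ^ 2
      = ‖r‖ ^ 2 - σ ^ 2 * r i ^ 2 / ‖rowE A i‖ ^ 2 := by
    intro i
    have h7 : mulE A (rkasStep A b x i) - mulE A xbar
        = r - (⟪mulE A (rowE A i), r⟫ / ‖mulE A (rowE A i)‖ ^ 2) • mulE A (rowE A i) := by
      rw [rkasStep, mulE_sub, mulE_smul, hib, hrdef]
      abel
    rw [h7, proj_resid _ _ (hvne i), hinner i, hvnorm i]
    have hσ2 : σ ^ 2 ≠ 0 := by positivity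
    have hrw : ‖rowE A i‖ ^ 2 ≠ 0 := ne_of_gt (hrowpos i)
    field_simp
  have hFrows : ∑ i, ‖rowE A i‖ ^ 2 = frobSq A := by
    rw [frobSq]
    exact Finset.sum_congr rfl fun i _ => by
      rw [normSq_eq]
      exact Finset.sum_congr rfl fun j _ => by rw [rowE_apply]
  have hFpos : 0 < frobSq A := by
    rw [← hFrows]
    have hne : (Finset.univ : Finset (Fin m)).Nonempty → True := fun _ => trivial
    by_cases hm : (Finset.univ : Finset (Fin m)).Nonempty
    · exact Finset.sum_pos (fun i _ => hrowpos i) hm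
    · exfalso
      apply hA
      ext i j
      exact absurd (Finset.mem_univ i) (fun h => hm ⟨i, h⟩)
  have hFne : frobSq A ≠ 0 := ne_of_gt hFpos
  calc ∑ i, ‖rowE A i‖ ^ 2 / frobSq A * ‖mulE A (rkasStep A b x i) - mulE A xbar‖ ^ 2
      = ∑ i, (‖rowE A i‖ ^ 2 / frobSq A * ‖r‖ ^ 2 - σ ^ 2 / frobSq A * r i ^ 2) := by
        refine Finset.sum_congr rfl fun i _ => ?_
        rw [hterm i]
        have hrw : ‖rowE A i‖ ^ 2 ≠ 0 := ne_of_gt (hrowpos i)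
        rw [mul_sub, div_mul_div_comm, mul_comm (‖rowE A i‖ ^ 2) (σ ^ 2 * _), mul_div_mul_right _ _ hrw]
        ring
    _ = (∑ i, ‖rowE A i‖ ^ 2) / frobSq A * ‖r‖ ^ 2 - σ ^ 2 / frobSq A * ∑ i, r i ^ 2 := by
        rw [Finset.sum_sub_distrib, ← Finset.sum_mul, ← Finset.mul_sum, Finset.sum_div]
    _ = (1 - σ ^ 2 / frobSq A) * ‖r‖ ^ 2 := by
        rw [hFrows, ← normSq_eq, div_self hFne]
        ring
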